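/- Let w be a doubling weight on the unit ball B^d and for a positive integer n define w_n(x) = w(B(x,1/n)) / |B(x,1/n)|, where |B(x,1/n)| is the Lebesgue measure of B(x,1/n). Then there exist constants C > 0 and s > 0 depending only on d and the doubling constant of w such that for every positive integer n and all x, y ∈ B^d, w_n(x) ≤ C (1 + n·d(x,y))^{s+1} w_n(y). -/

import Mathlib

open MeasureTheory MvPolynomial Real

noncomputable section

/-- Euclidean inner product on `Fin d → ℝ`. -/
def edot {d : ℕ} (x y : Fin d → ℝ) : ℝ := ∑ i, x i * y i

/-- Squared Euclidean norm on `Fin d → ℝ`. -/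
def enormSq {d : ℕ} (x : Fin d → ℝ) : ℝ := ∑ i, x i ^ 2

/-- The closed unit ball `B^d = {x : |x| ≤ 1}`. -/
def Ball (d : ℕ) : Set (Fin d → ℝ) := {x | enormSq x ≤ 1}

/-- The distance `d(x,y) = arccos(x·y + √(1-|x|²)√(1-|y|²))` on the ball. -/
def bdist {d : ℕ} (x y : Fin d → ℝ) : ℝ :=
  Real.arccos (edot x y + Real.sqrt (1 - enormSq x) * Real.sqrt (1 - enormSq y))

/-- The ball-cap `B(x,r) = {y ∈ B^d : d(x,y) ≤ r}`. -/
def bcap {d : ℕ} (x : Fin d → ℝ) (r : ℝ) : Set (Fin d → ℝ) :=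
  {y | y ∈ Ball d ∧ bdist x y ≤ r}

/-- `w(E) = ∫_E w(x) dx`. -/
def wInt {d : ℕ} (w : (Fin d → ℝ) → ℝ) (E : Set (Fin d → ℝ)) : ℝ := ∫ y in E, w y

/-- `w` is a doubling weight on the ball `B^d`, with doubling constant `L`. -/
structure IsDoublingWeight {d : ℕ} (w : (Fin d → ℝ) → ℝ) (L : ℝ) : Prop where
  nonneg : ∀ x ∈ Ball d, 0 ≤ w x
  integrableOn : IntegrableOn w (Ball d)
  pos : 0 < ∫ x in Ball d, w x
  doubling : ∀ x ∈ Ball d, ∀ r > 0, wInt w (bcap x (2 * r)) ≤ L * wInt w (bcap x r)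

/-- The weighted `L_p` norm `‖f‖_{p,w}` on the ball. -/
def wNorm {d : ℕ} (p : ℝ) (w f : (Fin d → ℝ) → ℝ) : ℝ :=
  (∫ x in Ball d, |f x| ^ p * w x) ^ (1 / p)

/-- The Euclidean norm of the gradient of a polynomial at a point. -/
def gradNorm {d : ℕ} (P : MvPolynomial (Fin d) ℝ) (x : Fin d → ℝ) : ℝ :=
  Real.sqrt (∑ i, (MvPolynomial.eval x (MvPolynomial.pderiv i P)) ^ 2)


/-- The averaged weight `w_n(x) = w(B(x,1/n)) / |B(x,1/n)|`. -/
def wnFn {d : ℕ} (w : (Fin d → ℝ) → ℝ) (n : ℕ) (x : Fin d → ℝ) : ℝ :=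
  wInt w (bcap x (1 / n)) / (volume (bcap x (1 / n))).toReal


/-!
Lifting `x ↦ (x, √(1 - |x|²))` identifies `B^d` with the upper unit hemisphere of `ℝ^{d+1}`
and turns `d(x, y)` into the angle between the lifts, which satisfies the triangle inequality.
The homothety of ratio `1/4` centred at `x` at least halves chords from the lift of `x`, so it
maps `B(x, 2r)` into `B(x, r)`: Lebesgue measure is doubling on caps with constant `4^d`.
For any set function doubling on caps with constant `2^q`, the inclusion
`B(x, r) ⊆ B(y, d(x, y) + r)` and iterated doubling give
`μ B(x, r) ≤ 2^q (1 + d(x, y)/r)^q μ B(y, r)`; at `r = 1/n` this bounds `w(B(x, 1/n))` from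
above and `|B(x, 1/n)|` from below.
-/

open InnerProductGeometry
open scoped InnerProductSpace ENNReal

lemma sub_sq_le_of_sq_eq_convex {a b c E t : ℝ} (ha : 0 ≤ a) (hc : 0 ≤ c) (hE : 0 ≤ E)
    (ht0 : 0 ≤ t) (ht1 : t ≤ 1) (h : c ^ 2 = (1 - t) * a ^ 2 + t * b ^ 2 + t * (1 - t) * E) :
    (c - a) ^ 2 ≤ t * (b - a) ^ 2 + t * (1 - t) * E := by
  have hconv : (1 - t) * a + t * b ≤ c := by
    nlinarith [mul_nonneg (mul_nonneg ht0 (sub_nonneg.2 ht1)) (sq_nonneg (a - b)),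
      mul_nonneg (mul_nonneg ht0 (sub_nonneg.2 ht1)) hE]
  nlinarith [mul_le_mul_of_nonneg_left hconv ha]

lemma le_half_of_four_mul_one_sub_cos_le {φ θ : ℝ} (hφ0 : 0 ≤ φ) (hφ : φ ≤ π) (hθ0 : 0 ≤ θ)
    (hθ : θ ≤ π) (h : 4 * (1 - cos φ) ≤ 1 - cos θ) : φ ≤ θ / 2 := by
  -- `cos θ = 2 cos² (θ/2) - 1`, so `cos φ ≥ (1 + cos² (θ/2)) / 2 ≥ cos (θ/2)`
  have hcos : cos (θ / 2) ≤ cos φ := by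
    have hsq := Real.cos_sq (θ / 2)
    rw [mul_div_cancel₀ θ two_ne_zero] at hsq
    nlinarith [sq_nonneg (cos (θ / 2) - 1)]
  exact (Real.strictAntiOn_cos.le_iff_ge ⟨by linarith, by linarith⟩ ⟨hφ0, hφ⟩).1 hcos

lemma le_pow_mul_of_doubling {α : Type*} [Semiring α] [PartialOrder α] [IsOrderedRing α]
    {g : ℝ → α} {A : α} (hA : 0 ≤ A) (hg : ∀ s > 0, g (2 * s) ≤ A * g s) {r : ℝ} (hr : 0 < r)
    (k : ℕ) : g (2 ^ k * r) ≤ A ^ k * g r := by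
  induction k with
  | zero => simp
  | succ k ih =>
    calc g (2 ^ (k + 1) * r) = g (2 * (2 ^ k * r)) := by rw [pow_succ']; ring_nf
      _ ≤ A * g (2 ^ k * r) := hg _ (by positivity)
      _ ≤ A * (A ^ k * g r) := mul_le_mul_of_nonneg_left ih hA
      _ = A ^ (k + 1) * g r := by rw [pow_succ', mul_assoc]

lemma le_two_pow_mul_div_pow_of_doubling {g : ℝ → ℝ} {q : ℕ} (hmono : Monotone g)
    (hg : ∀ s > 0, g (2 * s) ≤ 2 ^ q * g s) {r R : ℝ} (hr : 0 < r) (hrR : r ≤ R)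
    (hgr : 0 ≤ g r) : g R ≤ 2 ^ q * (R / r) ^ q * g r := by
  obtain ⟨k, hk, hk'⟩ := exists_nat_pow_near ((one_le_div hr).2 hrR) one_lt_two
  calc g R ≤ g (2 ^ (k + 1) * r) := hmono ((div_le_iff₀ hr).1 hk'.le)
    _ ≤ (2 ^ q) ^ (k + 1) * g r := le_pow_mul_of_doubling (by positivity) hg hr _
    _ = 2 ^ q * ((2 : ℝ) ^ k) ^ q * g r := by ring
    _ ≤ 2 ^ q * (R / r) ^ q * g r := by gcongr

lemma div_le_mul_mul_div {a b c e K M : ℝ} (hb : 0 < b) (he : 0 < e) (hK : 0 ≤ K)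
    (hc : 0 ≤ c) (ha : a ≤ K * c) (heb : e ≤ M * b) : a / b ≤ K * M * (c / e) := by
  rw [div_le_iff₀ hb]
  calc a ≤ K * (c / e) * e := by rwa [mul_assoc, div_mul_cancel₀ _ he.ne']
    _ ≤ K * (c / e) * (M * b) := by gcongr
    _ = K * M * (c / e) * b := by ring

variable {d : ℕ}

lemma enormSq_nonneg (x : Fin d → ℝ) : 0 ≤ enormSq x :=
  Finset.sum_nonneg fun _ _ => sq_nonneg _

lemma enormSq_sub (x y : Fin d → ℝ) :
    enormSq (x - y) = enormSq x + enormSq y - 2 * edot x y := by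
  simp only [enormSq, edot, Pi.sub_apply, Finset.mul_sum, ← Finset.sum_add_distrib,
    ← Finset.sum_sub_distrib]
  exact Finset.sum_congr rfl fun _ _ => by ring

def sphereHeight (x : Fin d → ℝ) : ℝ := √(1 - enormSq x)

lemma sphereHeight_nonneg (x : Fin d → ℝ) : 0 ≤ sphereHeight x := Real.sqrt_nonneg _

lemma sphereHeight_sq {x : Fin d → ℝ} (hx : x ∈ Ball d) :
    sphereHeight x ^ 2 = 1 - enormSq x :=
  Real.sq_sqrt (sub_nonneg.2 hx)

def sphereLift (x : Fin d → ℝ) : EuclideanSpace ℝ (Fin (d + 1)) :=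
  WithLp.toLp 2 (Fin.snoc x (sphereHeight x))

lemma inner_sphereLift (x y : Fin d → ℝ) :
    ⟪sphereLift x, sphereLift y⟫_ℝ = edot x y + sphereHeight x * sphereHeight y := by
  simp [sphereLift, PiLp.inner_apply, Fin.sum_univ_castSucc, edot, mul_comm]

lemma norm_sphereLift {x : Fin d → ℝ} (hx : x ∈ Ball d) : ‖sphereLift x‖ = 1 := by
  have h : ‖sphereLift x‖ ^ 2 = 1 := by
    rw [← real_inner_self_eq_norm_sq, inner_sphereLift, ← sq, sphereHeight_sq hx]
    simp only [enormSq, edot, sq]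
    ring
  exact (pow_eq_one_iff_of_nonneg (norm_nonneg _) two_ne_zero).1 h

lemma bdist_eq_angle {x y : Fin d → ℝ} (hx : x ∈ Ball d) (hy : y ∈ Ball d) :
    bdist x y = angle (sphereLift x) (sphereLift y) := by
  rw [angle, norm_sphereLift hx, norm_sphereLift hy, mul_one, div_one, inner_sphereLift]
  rfl

lemma bdist_comm (x y : Fin d → ℝ) : bdist x y = bdist y x := by
  simp only [bdist, edot, mul_comm]

lemma bdist_nonneg (x y : Fin d → ℝ) : 0 ≤ bdist x y := Real.arccos_nonneg _

lemma bdist_le_pi (x y : Fin d → ℝ) : bdist x y ≤ π := Real.arccos_le_pi _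

lemma bdist_triangle {x y z : Fin d → ℝ} (hx : x ∈ Ball d) (hy : y ∈ Ball d)
    (hz : z ∈ Ball d) : bdist x z ≤ bdist x y + bdist y z := by
  rw [bdist_eq_angle hx hy, bdist_eq_angle hy hz, bdist_eq_angle hx hz]
  exact angle_le_angle_add_angle _ _ _

lemma cos_bdist {x y : Fin d → ℝ} (hx : x ∈ Ball d) (hy : y ∈ Ball d) :
    cos (bdist x y) = edot x y + sphereHeight x * sphereHeight y := by
  rw [bdist_eq_angle hx hy, cos_angle, norm_sphereLift hx, norm_sphereLift hy, mul_one, div_one,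
    inner_sphereLift]

lemma two_sub_two_mul_cos_bdist {x y : Fin d → ℝ} (hx : x ∈ Ball d) (hy : y ∈ Ball d) :
    2 - 2 * cos (bdist x y) = enormSq (x - y) + (sphereHeight x - sphereHeight y) ^ 2 := by
  rw [cos_bdist hx hy, enormSq_sub]
  linear_combination -(sphereHeight_sq hx) - sphereHeight_sq hy

lemma bcap_subset_Ball (x : Fin d → ℝ) (r : ℝ) : bcap x r ⊆ Ball d := fun _ hy => hy.1

lemma bcap_mono (x : Fin d → ℝ) {r R : ℝ} (h : r ≤ R) : bcap x r ⊆ bcap x R :=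
  fun _ hz => ⟨hz.1, hz.2.trans h⟩

lemma bcap_subset_bcap_add {x y : Fin d → ℝ} (hx : x ∈ Ball d) (hy : y ∈ Ball d) (r : ℝ) :
    bcap x r ⊆ bcap y (bdist x y + r) := fun z hz =>
  ⟨hz.1, (bdist_triangle hy hx hz.1).trans (by rw [bdist_comm y x]; linarith [hz.2])⟩

lemma bcap_eq_Ball (x : Fin d → ℝ) {R : ℝ} (hR : π ≤ R) : bcap x R = Ball d :=
  Set.Subset.antisymm (bcap_subset_Ball x R) fun y hy => ⟨hy, (bdist_le_pi x y).trans hR⟩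

lemma homothety_apply_coord (x y : Fin d → ℝ) (t : ℝ) (i : Fin d) :
    AffineMap.homothety x t y i = x i + t * (y i - x i) := by
  simp [AffineMap.homothety_apply]
  ring

lemma enormSq_homothety (x y : Fin d → ℝ) (t : ℝ) :
    enormSq (AffineMap.homothety x t y) =
      (1 - t) * enormSq x + t * enormSq y - t * (1 - t) * enormSq (x - y) := by
  simp only [enormSq, homothety_apply_coord, Pi.sub_apply, Finset.mul_sum,
    ← Finset.sum_add_distrib, ← Finset.sum_sub_distrib]
  exact Finset.sum_congr rfl fun _ _ => by ring

lemma enormSq_sub_homothety (x y : Fin d → ℝ) (t : ℝ) :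
    enormSq (x - AffineMap.homothety x t y) = t ^ 2 * enormSq (x - y) := by
  simp only [enormSq, homothety_apply_coord, Pi.sub_apply, Finset.mul_sum]
  exact Finset.sum_congr rfl fun _ _ => by ring

lemma homothety_mem_Ball {x y : Fin d → ℝ} (hx : x ∈ Ball d) (hy : y ∈ Ball d) {t : ℝ}
    (ht0 : 0 ≤ t) (ht1 : t ≤ 1) : AffineMap.homothety x t y ∈ Ball d := by
  have hE := mul_nonneg (mul_nonneg ht0 (sub_nonneg.2 ht1)) (enormSq_nonneg (x - y))
  show enormSq _ ≤ 1
  rw [enormSq_homothety]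
  nlinarith [mul_le_mul_of_nonneg_left (show enormSq x ≤ 1 from hx) (sub_nonneg.2 ht1),
    mul_le_mul_of_nonneg_left (show enormSq y ≤ 1 from hy) ht0]

lemma bdist_homothety_le {x y : Fin d → ℝ} (hx : x ∈ Ball d) (hy : y ∈ Ball d) {t : ℝ}
    (ht0 : 0 ≤ t) (ht : t ≤ 1 / 4) : bdist x (AffineMap.homothety x t y) ≤ bdist x y / 2 := by
  set z := AffineMap.homothety x t y
  have hz : z ∈ Ball d := homothety_mem_Ball hx hy ht0 (by linarith)
  have hE := enormSq_nonneg (x - y)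
  have hheight : (sphereHeight z - sphereHeight x) ^ 2 ≤
      t * (sphereHeight y - sphereHeight x) ^ 2 + t * (1 - t) * enormSq (x - y) := by
    refine sub_sq_le_of_sq_eq_convex (sphereHeight_nonneg x) (sphereHeight_nonneg z) hE ht0
      (by linarith) ?_
    rw [sphereHeight_sq hx, sphereHeight_sq hy, sphereHeight_sq hz, enormSq_homothety]
    ring
  have hchord : 4 * (2 - 2 * cos (bdist x z)) ≤ 2 - 2 * cos (bdist x y) := by
    rw [two_sub_two_mul_cos_bdist hx hz, two_sub_two_mul_cos_bdist hx hy,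
      enormSq_sub_homothety]
    nlinarith [sq_nonneg (sphereHeight x - sphereHeight y)]
  exact le_half_of_four_mul_one_sub_cos_le (bdist_nonneg x z) (bdist_le_pi x z)
    (bdist_nonneg x y) (bdist_le_pi x y) (by linarith)

lemma continuous_enormSq : Continuous (enormSq : (Fin d → ℝ) → ℝ) := by
  unfold enormSq; fun_prop

lemma continuous_bdist (x : Fin d → ℝ) : Continuous (bdist x) := by
  unfold bdist edot enormSq
  exact Real.continuous_arccos.comp (by fun_prop)

lemma measurableSet_bcap (x : Fin d → ℝ) (r : ℝ) : MeasurableSet (bcap x r) :=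
  ((isClosed_le continuous_enormSq continuous_const).inter
    (isClosed_le (continuous_bdist x) continuous_const)).measurableSet

lemma Ball_subset_closedBall : Ball d ⊆ Metric.closedBall 0 1 := fun x hx => by
  rw [mem_closedBall_zero_iff, pi_norm_le_iff_of_nonneg zero_le_one]
  intro i
  rw [Real.norm_eq_abs, ← sq_le_one_iff_abs_le_one]
  exact (Finset.single_le_sum (fun j _ => sq_nonneg (x j)) (Finset.mem_univ i)).trans hx

lemma volume_bcap_lt_top (x : Fin d → ℝ) (r : ℝ) : volume (bcap x r) < ∞ :=
  (Metric.isBounded_closedBall.subset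
    ((bcap_subset_Ball x r).trans Ball_subset_closedBall)).measure_lt_top

lemma volume_Ball_pos : 0 < volume (Ball d) := by
  have hopen : IsOpen {x : Fin d → ℝ | enormSq x < 1} :=
    isOpen_lt continuous_enormSq continuous_const
  exact (hopen.measure_pos volume ⟨0, by simp [enormSq]⟩).trans_le
    (measure_mono fun x (hx : enormSq x < 1) => hx.le)

lemma volume_bcap_two_mul_le {x : Fin d → ℝ} (hx : x ∈ Ball d) (r : ℝ) :
    volume (bcap x (2 * r)) ≤ 4 ^ d * volume (bcap x r) := by
  have himage : AffineMap.homothety x (4⁻¹ : ℝ) '' bcap x (2 * r) ⊆ bcap x r := by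
    rintro _ ⟨y, hy, rfl⟩
    refine ⟨homothety_mem_Ball hx hy.1 (by norm_num) (by norm_num), ?_⟩
    linarith [bdist_homothety_le hx hy.1 (t := 4⁻¹) (by norm_num) (by norm_num), hy.2]
  have hscale := Measure.addHaar_image_homothety volume x (4⁻¹ : ℝ) (bcap x (2 * r))
  rw [Module.finrank_fin_fun, abs_of_pos (by norm_num), ENNReal.ofReal_pow (by norm_num),
    ENNReal.ofReal_inv_of_pos (by norm_num), ENNReal.ofReal_ofNat, ← ENNReal.inv_pow] at hscale
  calc volume (bcap x (2 * r))
      = 4 ^ d * ((4 ^ d)⁻¹ * volume (bcap x (2 * r))) := by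
        rw [← mul_assoc, ENNReal.mul_inv_cancel (by positivity) (by finiteness), one_mul]
    _ ≤ 4 ^ d * volume (bcap x r) := by
        gcongr
        rw [← hscale]
        exact measure_mono himage

lemma volume_bcap_pos {x : Fin d → ℝ} (hx : x ∈ Ball d) {r : ℝ} (hr : 0 < r) :
    0 < volume (bcap x r) := by
  obtain ⟨k, hk⟩ := pow_unbounded_of_one_lt (π / r) one_lt_two
  have hcover : bcap x (2 ^ k * r) = Ball d :=
    bcap_eq_Ball x (by rw [div_lt_iff₀ hr] at hk; linarith)
  have hiter := le_pow_mul_of_doubling (g := fun s => volume (bcap x s)) (by positivity)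
    (fun s _ => volume_bcap_two_mul_le hx s) hr k
  refine pos_iff_ne_zero.2 fun h0 => (volume_Ball_pos (d := d)).ne' ?_
  rw [← hcover]
  simpa [h0] using hiter

lemma volume_real_bcap_pos {x : Fin d → ℝ} (hx : x ∈ Ball d) {r : ℝ} (hr : 0 < r) :
    0 < (volume (bcap x r)).toReal :=
  ENNReal.toReal_pos (volume_bcap_pos hx hr).ne' (volume_bcap_lt_top x r).ne

lemma volume_real_bcap_two_mul_le {x : Fin d → ℝ} (hx : x ∈ Ball d) (r : ℝ) :
    (volume (bcap x (2 * r))).toReal ≤ 2 ^ (2 * d) * (volume (bcap x r)).toReal := by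
  have h := ENNReal.toReal_mono (by finiteness [volume_bcap_lt_top x r])
    (volume_bcap_two_mul_le hx r)
  rw [pow_mul, show (2 : ℝ) ^ 2 = 4 by norm_num]
  rwa [ENNReal.toReal_mul, ENNReal.toReal_pow, ENNReal.toReal_ofNat] at h

lemma apply_bcap_le_of_doubling {μ : Set (Fin d → ℝ) → ℝ} {q : ℕ}
    (hmono : ∀ x r y R, bcap x r ⊆ bcap y R → μ (bcap x r) ≤ μ (bcap y R))
    (hnonneg : ∀ x r, 0 ≤ μ (bcap x r))
    (hdouble : ∀ x ∈ Ball d, ∀ r > 0, μ (bcap x (2 * r)) ≤ 2 ^ q * μ (bcap x r))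
    {x y : Fin d → ℝ} (hx : x ∈ Ball d) (hy : y ∈ Ball d) {r : ℝ} (hr : 0 < r) :
    μ (bcap x r) ≤ 2 ^ q * (1 + bdist x y / r) ^ q * μ (bcap y r) := by
  have hgrowth := le_two_pow_mul_div_pow_of_doubling (g := fun s => μ (bcap y s))
    (fun _ _ h => hmono _ _ _ _ (bcap_mono y h)) (hdouble y hy) hr
    (le_add_of_nonneg_left (bdist_nonneg x y)) (hnonneg y r)
  calc μ (bcap x r) ≤ μ (bcap y (bdist x y + r)) :=
        hmono _ _ _ _ (bcap_subset_bcap_add hx hy r)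
    _ ≤ _ := hgrowth
    _ = 2 ^ q * (1 + bdist x y / r) ^ q * μ (bcap y r) := by
      rw [add_div, div_self hr.ne', add_comm]

lemma volume_real_bcap_le {x y : Fin d → ℝ} (hx : x ∈ Ball d) (hy : y ∈ Ball d) {r : ℝ}
    (hr : 0 < r) : (volume (bcap x r)).toReal ≤
      2 ^ (2 * d) * (1 + bdist x y / r) ^ (2 * d) * (volume (bcap y r)).toReal :=
  apply_bcap_le_of_doubling (μ := fun s => (volume s).toReal)
    (fun _ _ y R h => ENNReal.toReal_mono (volume_bcap_lt_top y R).ne (measure_mono h))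
    (fun _ _ => ENNReal.toReal_nonneg) (fun _ hx r _ => volume_real_bcap_two_mul_le hx r)
    hx hy hr

namespace IsDoublingWeight

variable {w : (Fin d → ℝ) → ℝ} {L : ℝ}

lemma wInt_mono (hw : IsDoublingWeight w L) {s t : Set (Fin d → ℝ)} (hst : s ⊆ t)
    (ht : t ⊆ Ball d) (htm : MeasurableSet t) : wInt w s ≤ wInt w t :=
  setIntegral_mono_set (hw.integrableOn.mono_set ht)
    ((ae_restrict_iff' htm).2 (Filter.Eventually.of_forall fun y hy => hw.nonneg y (ht hy)))
    hst.eventuallyLE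

lemma wInt_bcap_nonneg (hw : IsDoublingWeight w L) (x : Fin d → ℝ) (r : ℝ) :
    0 ≤ wInt w (bcap x r) :=
  setIntegral_nonneg (measurableSet_bcap x r) fun y hy => hw.nonneg y hy.1

lemma wInt_bcap_le (hw : IsDoublingWeight w L) {q : ℕ} (hL : L ≤ 2 ^ q) {x y : Fin d → ℝ}
    (hx : x ∈ Ball d) (hy : y ∈ Ball d) {r : ℝ} (hr : 0 < r) :
    wInt w (bcap x r) ≤ 2 ^ q * (1 + bdist x y / r) ^ q * wInt w (bcap y r) :=
  apply_bcap_le_of_doubling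
    (fun _ _ _ _ h => hw.wInt_mono h (bcap_subset_Ball _ _) (measurableSet_bcap _ _))
    hw.wInt_bcap_nonneg
    (fun x hx r hr => (hw.doubling x hx r hr).trans
      (mul_le_mul_of_nonneg_right hL (hw.wInt_bcap_nonneg x r)))
    hx hy hr

end IsDoublingWeight

/-- `w_n(x) ≤ C (1 + n d(x,y))^{s+1} w_n(y)` for all `x,y` in the ball,
with `C, s` depending only on `d` and the doubling constant of `w`. -/
theorem wn_pointwise_comparison (d : ℕ)
    (w : (Fin d → ℝ) → ℝ) (L : ℝ) (hw : IsDoublingWeight w L) :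
    ∃ C > 0, ∃ s > 0, ∀ n : ℕ, 1 ≤ n → ∀ x ∈ Ball d, ∀ y ∈ Ball d,
      wnFn w n x ≤ C * (1 + (n : ℝ) * bdist x y) ^ (s + 1) * wnFn w n y := by
  obtain ⟨q, hq⟩ := pow_unbounded_of_one_lt L one_lt_two
  -- `q + 2` so that the total exponent `q + 2 + 2 d` is `s + 1` with `s > 0`
  have hL : L ≤ 2 ^ (q + 2) := hq.le.trans (pow_le_pow_right₀ one_le_two (by omega))
  refine ⟨2 ^ (q + 2) * 2 ^ (2 * d), by positivity, q + 1 + 2 * d, by omega,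
    fun n hn x hx y hy => ?_⟩
  have hr : (0 : ℝ) < 1 / n := by positivity
  have hratio : 1 + bdist x y / (1 / n) = 1 + n * bdist x y := by
    rw [div_div_eq_mul_div, div_one, mul_comm]
  have hW := hw.wInt_bcap_le hL hx hy hr
  have hV := volume_real_bcap_le hy hx hr
  rw [bdist_comm y x] at hV
  rw [hratio] at hW hV
  have hρ := bdist_nonneg x y
  calc wnFn w n x
      ≤ 2 ^ (q + 2) * (1 + n * bdist x y) ^ (q + 2) *
          (2 ^ (2 * d) * (1 + n * bdist x y) ^ (2 * d)) * wnFn w n y :=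
        div_le_mul_mul_div (volume_real_bcap_pos hx hr) (volume_real_bcap_pos hy hr)
          (by positivity) (hw.wInt_bcap_nonneg y _) hW hV
    _ = 2 ^ (q + 2) * 2 ^ (2 * d) * (1 + n * bdist x y) ^ (q + 1 + 2 * d + 1) * wnFn w n y := by
        ring

end
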